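/- arXiv:2206.08667 — 8 statements merged into one kernel-verified Lean document; each statement's English description precedes it below -/
import Mathlib

section
/- Let $\sigma_1, \ldots, \sigma_N$ be points in $\mathbb{R}^2$, and let $u \in H^1([0,1]; \mathbb{R}^2)$ with $u(0) = u(1)$ and $u(s) \neq \sigma_i$ for all $s \in [0,1]$ and all $i$. If the loop $u$ is not null-homotopic in $\mathbb{R}^2 \setminus \{\sigma_1, \ldots, \sigma_N\}$, then $\|u\|_{L^\infty} \leq R + \|u'\|_{L^2}$, where $R = \max_i |\sigma_i|$. -/
/-- If an `H¹` loop `u` in the plane avoids the centers `σ i` and is not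
null-homotopic in the punctured plane, then `‖u‖_{L^∞} ≤ R + ‖u'‖_{L²}`,
where `R = max_i |σ i|`. -/
theorem stmt_5 (N : ℕ) (hN : 1 ≤ N) (σ : Fin N → EuclideanSpace ℝ (Fin 2))
    (u u' : ℝ → EuclideanSpace ℝ (Fin 2))
    (hu : ∀ t ∈ Set.Icc (0 : ℝ) 1, HasDerivAt u (u' t) t)
    (hu' : IntervalIntegrable (fun s => ‖u' s‖ ^ 2) MeasureTheory.volume 0 1)
    (hper : u 0 = u 1)
    (havoid : ∀ t ∈ Set.Icc (0 : ℝ) 1, ∀ i, u t ≠ σ i)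
    (hnonnull : ¬ ∃ F : ℝ → ℝ → EuclideanSpace ℝ (Fin 2),
      Continuous (fun p : ℝ × ℝ => F p.1 p.2) ∧
      (∀ t ∈ Set.Icc (0 : ℝ) 1, F 0 t = u t) ∧
      (∀ t ∈ Set.Icc (0 : ℝ) 1, F 1 t = u 0) ∧
      (∀ s ∈ Set.Icc (0 : ℝ) 1, F s 0 = F s 1) ∧
      (∀ s ∈ Set.Icc (0 : ℝ) 1, ∀ t ∈ Set.Icc (0 : ℝ) 1, ∀ i, F s t ≠ σ i))
    (R : ℝ) (hR : IsGreatest (Set.range fun i => ‖σ i‖) R) :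
    ∀ t ∈ Set.Icc (0 : ℝ) 1,
      ‖u t‖ ≤ R + Real.sqrt (∫ s in (0 : ℝ)..1, ‖u' s‖ ^ 2) := by
  intro t ht
  by_contra hcon
  push_neg at hcon
  set I := ∫ s in (0 : ℝ)..1, ‖u' s‖ ^ 2 with hIdef
  set L := Real.sqrt I with hLdef
  have hI0 : 0 ≤ I := intervalIntegral.integral_nonneg (by norm_num) (fun s _ => sq_nonneg _)
  -- a.e. strong measurability of u' on (0,1]
  have hmeas : MeasureTheory.AEStronglyMeasurable u'
      (MeasureTheory.volume.restrict (Set.Ioc (0 : ℝ) 1)) := by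
    apply (stronglyMeasurable_deriv u).aestronglyMeasurable.congr
    refine (MeasureTheory.ae_restrict_iff' measurableSet_Ioc).mpr
      (MeasureTheory.ae_of_all _ fun x hx => ?_)
    exact (hu x (Set.Ioc_subset_Icc_self hx)).deriv
  have hsq : MeasureTheory.IntegrableOn (fun s => ‖u' s‖ ^ 2) (Set.Ioc (0 : ℝ) 1) := hu'.1
  have hg : MeasureTheory.IntegrableOn (fun s => (1 + ‖u' s‖ ^ 2) / 2) (Set.Ioc (0 : ℝ) 1) :=
    (((MeasureTheory.integrableOn_const_iff (C := (1:ℝ))).mpr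
      (Or.inr (by simp))).add hsq).div_const 2
  have hu'int : MeasureTheory.IntegrableOn u' (Set.Ioc (0 : ℝ) 1) :=
    MeasureTheory.Integrable.mono' hg hmeas
      (MeasureTheory.ae_of_all _ fun s => by
        have h := sq_nonneg (‖u' s‖ - 1); nlinarith)
  have hu'ii : IntervalIntegrable u' MeasureTheory.volume 0 1 := by
    rw [intervalIntegrable_iff, Set.uIoc_of_le (by norm_num : (0:ℝ) ≤ 1)]
    exact hu'int
  have hnormii : IntervalIntegrable (fun s => ‖u' s‖) MeasureTheory.volume 0 1 := hu'ii.norm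
  -- Cauchy–Schwarz via AM–GM: ∫‖u'‖ ≤ ε/2 + I/(2ε)
  have hgen : ∀ ε : ℝ, 0 < ε → (∫ s in (0:ℝ)..1, ‖u' s‖) ≤ ε / 2 + I / (2 * ε) := by
    intro ε hε
    have h1 : (∫ s in (0:ℝ)..1, ‖u' s‖) ≤ ∫ s in (0:ℝ)..1, (ε / 2 + ‖u' s‖ ^ 2 / (2 * ε)) := by
      apply intervalIntegral.integral_mono_on (by norm_num) hnormii
      · exact intervalIntegrable_const.add (hu'.div_const (2 * ε))
      · intro x _
        have := sq_nonneg (‖u' x‖ - ε)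
        rw [div_add_div _ _ (by norm_num) (by positivity), le_div_iff₀ (by positivity)]
        nlinarith
    calc (∫ s in (0:ℝ)..1, ‖u' s‖)
        ≤ ∫ s in (0:ℝ)..1, (ε / 2 + ‖u' s‖ ^ 2 / (2 * ε)) := h1
      _ = ε / 2 + I / (2 * ε) := by
          rw [intervalIntegral.integral_add intervalIntegrable_const (hu'.div_const (2 * ε)),
            intervalIntegral.integral_const, intervalIntegral.integral_div]
          simp [hIdef]
  have hintnorm : (∫ s in (0:ℝ)..1, ‖u' s‖) ≤ L := by
    rcases eq_or_lt_of_le hI0 with h0 | hpos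
    · have hL0 : L = 0 := by rw [hLdef, ← h0, Real.sqrt_zero]
      rw [hL0]
      refine le_of_forall_pos_le_add fun ε hε => ?_
      have := hgen ε hε
      rw [← h0, zero_div] at this
      linarith
    · have hsp : 0 < Real.sqrt I := Real.sqrt_pos.mpr hpos
      have := hgen (Real.sqrt I) hsp
      have hmul : Real.sqrt I * Real.sqrt I = I := Real.mul_self_sqrt hI0
      rw [hLdef]
      calc (∫ s in (0:ℝ)..1, ‖u' s‖) ≤ Real.sqrt I / 2 + I / (2 * Real.sqrt I) := this
        _ = Real.sqrt I := by
            field_simp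
            nlinarith
  -- distance between any two points of the loop is ≤ L
  have hdiff : ∀ a ∈ Set.Icc (0:ℝ) 1, ∀ b ∈ Set.Icc (0:ℝ) 1, a ≤ b → ‖u b - u a‖ ≤ L := by
    intro a ha b hb hab
    have hsub : Set.uIcc a b ⊆ Set.Icc (0:ℝ) 1 := Set.uIcc_subset_Icc ha hb
    have hii : IntervalIntegrable u' MeasureTheory.volume a b :=
      hu'ii.mono_set (by rwa [Set.uIcc_of_le (by norm_num : (0:ℝ) ≤ 1)])
    have hftc : ∫ s in a..b, u' s = u b - u a :=
      intervalIntegral.integral_eq_sub_of_hasDerivAt (fun x hx => hu x (hsub hx)) hii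
    rw [← hftc]
    calc ‖∫ s in a..b, u' s‖ ≤ ∫ s in a..b, ‖u' s‖ :=
          intervalIntegral.norm_integral_le_integral_norm hab
      _ ≤ ∫ s in (0:ℝ)..1, ‖u' s‖ := by
          apply intervalIntegral.integral_mono_interval ha.1 hab hb.2
          · exact MeasureTheory.ae_of_all _ fun x => norm_nonneg _
          · exact hnormii
      _ ≤ L := hintnorm
  have hdiff' : ∀ a ∈ Set.Icc (0:ℝ) 1, ‖u a - u t‖ ≤ L := by
    intro a ha
    rcases le_total a t with h | h
    · rw [norm_sub_rev]; exact hdiff a ha t ht h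
    · exact hdiff t ht a ha h
  -- build the straight-line homotopy to the constant loop u 0
  apply hnonnull
  have hccont : Continuous (fun s : ℝ => max 0 (min 1 s)) :=
    continuous_const.max (continuous_const.min continuous_id)
  have hucont : Continuous (fun τ : ℝ => u (max 0 (min 1 τ))) := by
    rw [continuous_iff_continuousAt]
    intro x
    have hcl : max 0 (min 1 x) ∈ Set.Icc (0:ℝ) 1 :=
      ⟨le_max_left _ _, max_le (by norm_num) (min_le_left _ _)⟩
    exact ContinuousAt.comp ((hu _ hcl).continuousAt) hccont.continuousAt
  refine ⟨fun s τ => (1 - max 0 (min 1 s)) • u (max 0 (min 1 τ)) + max 0 (min 1 s) • u 0,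
    ?_, ?_, ?_, ?_, ?_⟩
  · exact ((continuous_const.sub (hccont.comp continuous_fst)).smul
      (hucont.comp continuous_snd)).add ((hccont.comp continuous_fst).smul continuous_const)
  · intro τ hτ
    have h1 : min 1 τ = τ := min_eq_right hτ.2
    have h2 : max 0 τ = τ := max_eq_right hτ.1
    simp [h1, h2]
  · intro τ hτ
    simp
  · intro s hs
    norm_num [hper]
  · intro s hs τ hτ i
    have hcs : max 0 (min 1 s) = s := by
      rw [min_eq_right hs.2, max_eq_right hs.1]
    have hcτ : max 0 (min 1 τ) = τ := by
      rw [min_eq_right hτ.2, max_eq_right hτ.1]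
    intro heq
    simp only [hcs, hcτ] at heq
    have hσR : ‖σ i‖ ≤ R := hR.2 ⟨i, rfl⟩
    set w : EuclideanSpace ℝ (Fin 2) := (1 - s) • u τ + s • u 0 with hw
    have hdecomp : w - u t = (1 - s) • (u τ - u t) + s • (u 0 - u t) := by
      rw [hw]; module
    have hb1 : ‖u τ - u t‖ ≤ L := hdiff' τ hτ
    have hb2 : ‖u 0 - u t‖ ≤ L := hdiff' 0 (by norm_num)
    have hL0 : 0 ≤ L := Real.sqrt_nonneg _
    have hwt : ‖w - u t‖ ≤ L := by
      rw [hdecomp]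
      calc ‖(1 - s) • (u τ - u t) + s • (u 0 - u t)‖
          ≤ ‖(1 - s) • (u τ - u t)‖ + ‖s • (u 0 - u t)‖ := norm_add_le _ _
        _ = (1 - s) * ‖u τ - u t‖ + s * ‖u 0 - u t‖ := by
            rw [norm_smul, norm_smul, Real.norm_eq_abs, Real.norm_eq_abs,
              abs_of_nonneg (by linarith [hs.2] : (0:ℝ) ≤ 1 - s), abs_of_nonneg hs.1]
        _ ≤ (1 - s) * L + s * L := by
            apply add_le_add
            · exact mul_le_mul_of_nonneg_left hb1 (by linarith [hs.2])
            · exact mul_le_mul_of_nonneg_left hb2 hs.1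
        _ = L := by ring
    have hlow : ‖u t‖ - ‖w‖ ≤ ‖w - u t‖ := by
      rw [norm_sub_rev]; exact norm_sub_norm_le _ _
    rw [heq] at hwt hlow
    linarith
end

section
/- Let $\kappa > 0$, $\alpha > 1$, $m, c > 0$, $h \in \mathbb{R}$, and let $V(x) = \frac{\kappa}{\alpha|x|^\alpha}$ on $\mathbb{R}^2 \setminus \{0\}$, $Z_h(x) = 2mV(x) + \frac{1}{c^2}(V(x)+h)^2$. Then $Z_h(x) + \frac{1}{2}\langle \nabla Z_h(x), x \rangle \to -\infty$ as $x \to 0$. -/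
open Filter Real

/-- For `V x = κ/(α |x|^α)` with `α > 1`, the quantity
`Z_h(x) + ½⟨∇Z_h(x), x⟩ → -∞` as `x → 0`. -/
theorem stmt_7 (κ α m c h : ℝ) (hκ : 0 < κ) (hα : 1 < α)
    (hm : 0 < m) (hc : 0 < c)
    (V Z : EuclideanSpace ℝ (Fin 2) → ℝ)
    (hV : ∀ x, x ≠ 0 → V x = κ / (α * ‖x‖ ^ α))
    (hZ : ∀ x, x ≠ 0 → Z x = 2 * m * V x + (1 / c ^ 2) * (V x + h) ^ 2) :
    Filter.Tendsto
      (fun x : EuclideanSpace ℝ (Fin 2) =>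
        Z x + (1 / 2) * (inner ℝ (gradient Z x) x : ℝ))
      (nhdsWithin 0 {x | x ≠ 0}) Filter.atBot := by
  have hα0 : 0 < α := lt_trans one_pos hα
  have hc2 : (0:ℝ) < c ^ 2 := by positivity
  -- the radial profile in the variable t = ‖x‖²
  set W : ℝ → ℝ := fun t => (κ / α) * t ^ (-(α / 2)) with hWdef
  set W' : ℝ → ℝ := fun t => (κ / α) * (-(α / 2) * t ^ (-(α / 2) - 1)) with hW'def
  set φ : ℝ → ℝ := fun t => 2 * m * W t + (1 / c ^ 2) * (W t + h) ^ 2 with hφdef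
  set φ' : ℝ → ℝ := fun t => 2 * m * W' t + (1 / c ^ 2) * (2 * (W t + h) * W' t) with hφ'def
  set q : ℝ → ℝ := fun v =>
    (2 - α) * m * v + (1 / c ^ 2) * ((v + h) ^ 2 - α * v * (v + h)) with hqdef
  -- W equals V on the sphere relation
  have hWV : ∀ x : EuclideanSpace ℝ (Fin 2), x ≠ 0 → W (‖x‖ ^ 2) = V x := by
    intro x hx
    have hxn : (0:ℝ) < ‖x‖ := norm_pos_iff.2 hx
    have h1 : (‖x‖ ^ 2 : ℝ) ^ (-(α / 2)) = ‖x‖ ^ (-α) := by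
      rw [← Real.rpow_natCast ‖x‖ 2, ← Real.rpow_mul (le_of_lt hxn)]
      congr 1
      ring
    rw [hV x hx]
    show (κ / α) * (‖x‖ ^ 2 : ℝ) ^ (-(α / 2)) = _
    rw [h1, Real.rpow_neg (le_of_lt hxn)]
    have hαx : (0:ℝ) < ‖x‖ ^ α := Real.rpow_pos_of_pos hxn α
    field_simp
  -- derivative facts
  have hWderiv : ∀ t : ℝ, 0 < t → HasDerivAt W (W' t) t := by
    intro t ht
    exact (Real.hasDerivAt_rpow_const (p := -(α/2)) (Or.inl ht.ne')).const_mul (κ / α)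
  have hφderiv : ∀ t : ℝ, 0 < t → HasDerivAt φ (φ' t) t := by
    intro t ht
    have hW := hWderiv t ht
    have h1 : HasDerivAt (fun t => 2 * m * W t) (2 * m * W' t) t := hW.const_mul _
    have h2 : HasDerivAt (fun t => (W t + h) ^ 2) (2 * (W t + h) * W' t) t := by
      simpa [Pi.pow_def] using ((hW.add_const h).pow 2)
    exact h1.add (h2.const_mul _)
  -- the key radial identity : φ t + t φ' t = q (W t)
  have hkey : ∀ t : ℝ, 0 < t → φ t + t * φ' t = q (W t) := by
    intro t ht
    have htw : t * W' t = -(α / 2) * W t := by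
      have h1 : t * t ^ (-(α / 2) - 1) = t ^ (-(α / 2)) := by
        have h2 := (Real.rpow_add ht 1 (-(α / 2) - 1)).symm
        rw [Real.rpow_one] at h2
        rw [h2]
        congr 1
        ring
      simp only [hW'def, hWdef]
      calc t * ((κ / α) * (-(α / 2) * t ^ (-(α / 2) - 1)))
          = (κ / α) * -(α / 2) * (t * t ^ (-(α / 2) - 1)) := by ring
        _ = -(α / 2) * ((κ / α) * t ^ (-(α / 2))) := by rw [h1]; ring
    simp only [hφdef, hφ'def, hqdef]
    linear_combination (2 * m + 2 / c ^ 2 * (W t + h)) * htw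
  -- at each x ≠ 0 the gradient of Z is (2 φ'(‖x‖²)) • x
  have hgrad : ∀ x : EuclideanSpace ℝ (Fin 2), x ≠ 0 →
      HasGradientAt Z ((2 * φ' (‖x‖ ^ 2)) • x) x := by
    intro x hx
    have hxn : (0:ℝ) < ‖x‖ := norm_pos_iff.2 hx
    have ht : (0:ℝ) < ‖x‖ ^ 2 := by positivity
    have hN : HasFDerivAt (fun y : EuclideanSpace ℝ (Fin 2) => ‖y‖ ^ 2)
        (2 • (innerSL ℝ x)) x := (hasStrictFDerivAt_norm_sq x).hasFDerivAt
    have hcomp : HasFDerivAt (fun y : EuclideanSpace ℝ (Fin 2) => φ (‖y‖ ^ 2))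
        (φ' (‖x‖ ^ 2) • (2 • (innerSL ℝ x))) x :=
      (hφderiv _ ht).comp_hasFDerivAt (f := fun y : EuclideanSpace ℝ (Fin 2) => ‖y‖ ^ 2) x hN
    have hGrad : HasGradientAt (fun y : EuclideanSpace ℝ (Fin 2) => φ (‖y‖ ^ 2))
        ((2 * φ' (‖x‖ ^ 2)) • x) x := by
      rw [hasGradientAt_iff_hasFDerivAt]
      refine hcomp.congr_fderiv ?_
      ext y
      simp [real_inner_smul_left, real_inner_comm]
      ring
    refine hGrad.congr_of_eventuallyEq ?_
    have hopen : IsOpen {y : EuclideanSpace ℝ (Fin 2) | y ≠ 0} := isOpen_ne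
    filter_upwards [hopen.mem_nhds hx] with y hy
    rw [hZ y hy, ← hWV y hy]
  -- so the function under study equals q ∘ W ∘ ‖·‖² on the punctured space
  have hEq : ∀ x : EuclideanSpace ℝ (Fin 2), x ≠ 0 →
      Z x + (1 / 2) * (inner ℝ (gradient Z x) x : ℝ) = q (W (‖x‖ ^ 2)) := by
    intro x hx
    have hxn : (0:ℝ) < ‖x‖ := norm_pos_iff.2 hx
    have ht : (0:ℝ) < ‖x‖ ^ 2 := pow_pos hxn 2
    rw [(hgrad x hx).gradient, real_inner_smul_left, real_inner_self_eq_norm_sq]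
    have hZx : Z x = φ (‖x‖ ^ 2) := by
      rw [hZ x hx, ← hWV x hx]
    rw [hZx, ← hkey _ ht]
    ring
  -- tendsto of W ∘ ‖·‖² to atTop
  have hWt : Tendsto (fun x : EuclideanSpace ℝ (Fin 2) => W (‖x‖ ^ 2))
      (nhdsWithin 0 {x | x ≠ 0}) atTop := by
    have h2 : Tendsto (fun x : EuclideanSpace ℝ (Fin 2) => (‖x‖ ^ 2 : ℝ) ^ (α / 2))
        (nhdsWithin 0 {x | x ≠ 0}) (nhdsWithin 0 (Set.Ioi 0)) := by
      rw [tendsto_nhdsWithin_iff]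
      constructor
      · have hcont : ContinuousAt (fun t : ℝ => t ^ (α / 2)) 0 :=
          Real.continuousAt_rpow_const 0 (α / 2) (Or.inr (by positivity))
        have hn : Tendsto (fun x : EuclideanSpace ℝ (Fin 2) => (‖x‖ ^ 2 : ℝ))
            (nhdsWithin 0 {x | x ≠ 0}) (nhds 0) := by
          have := (continuous_norm.pow 2).tendsto (0 : EuclideanSpace ℝ (Fin 2))
          simpa [Pi.pow_def] using this.mono_left nhdsWithin_le_nhds
        have := hcont.tendsto.comp hn
        simpa [Function.comp_def, Real.zero_rpow (by positivity : α / 2 ≠ 0)] using this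
      · filter_upwards [self_mem_nhdsWithin] with x hx
        have hxn : (0:ℝ) < ‖x‖ := norm_pos_iff.2 hx
        exact Real.rpow_pos_of_pos (by positivity) _
    have h3 : Tendsto (fun x : EuclideanSpace ℝ (Fin 2) => ((‖x‖ ^ 2 : ℝ) ^ (α / 2))⁻¹)
        (nhdsWithin 0 {x | x ≠ 0}) atTop := h2.inv_tendsto_nhdsGT_zero
    have h4 : Tendsto (fun x : EuclideanSpace ℝ (Fin 2) => (κ / α) * ((‖x‖ ^ 2 : ℝ) ^ (α / 2))⁻¹)
        (nhdsWithin 0 {x | x ≠ 0}) atTop := h3.const_mul_atTop (by positivity)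
    refine h4.congr' ?_
    filter_upwards [self_mem_nhdsWithin] with x hx
    have hxn : (0:ℝ) < ‖x‖ := norm_pos_iff.2 hx
    have ht : (0:ℝ) < ‖x‖ ^ 2 := pow_pos hxn 2
    show κ / α * ((‖x‖ ^ 2 : ℝ) ^ (α / 2))⁻¹ = κ / α * (‖x‖ ^ 2 : ℝ) ^ (-(α / 2))
    rw [Real.rpow_neg ht.le]
  -- q tends to atBot at atTop
  have hq : Tendsto q atTop atBot := by
    have hqq : q = fun v => v * (((1 - α) / c ^ 2) * v +
        ((2 - α) * m + (2 - α) * h / c ^ 2)) + h ^ 2 / c ^ 2 := by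
      funext v
      simp only [hqdef]
      field_simp
      ring
    rw [hqq]
    apply tendsto_atBot_add_const_right
    apply Tendsto.atTop_mul_atBot₀ tendsto_id
    apply tendsto_atBot_add_const_right
    exact (tendsto_const_mul_atBot_of_neg (by
      have : (1 - α) < 0 := by linarith
      exact div_neg_of_neg_of_pos this hc2)).2 tendsto_id
  -- conclude
  refine ((hq.comp hWt).congr' ?_)
  filter_upwards [self_mem_nhdsWithin] with x hx
  exact (hEq x hx).symm
end

section
/- Let $m, c, \kappa > 0$ and $\alpha \geq 2$. Define $f(t) = \frac{2m^2c^4 t}{-\kappa^2 + \kappa\sqrt{\kappa^2 + 4m^2c^4 t^2}} - \frac{1}{\alpha t}$ for $t > 0$. Then $f$ is strictly decreasing on $(0,\infty)$, and its range is $(mc^2/\kappa, +\infty)$. -/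
set_option maxHeartbeats 1000000 in
/-- For `α ≥ 2`, the function
`f t = 2m²c⁴t/(-κ² + κ√(κ²+4m²c⁴t²)) - 1/(αt)` is strictly decreasing on
`(0,∞)`, with range `(mc²/κ, +∞)`. -/
theorem stmt_10 (m c κ α : ℝ) (hm : 0 < m) (hc : 0 < c) (hκ : 0 < κ) (hα : 2 ≤ α)
    (f : ℝ → ℝ)
    (hf : ∀ t > (0 : ℝ), f t =
      2 * m ^ 2 * c ^ 4 * t / (-κ ^ 2 + κ * Real.sqrt (κ ^ 2 + 4 * m ^ 2 * c ^ 4 * t ^ 2))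
        - 1 / (α * t)) :
    StrictAntiOn f (Set.Ioi 0) ∧ f '' Set.Ioi 0 = Set.Ioi (m * c ^ 2 / κ) := by
  have hα0 : (0:ℝ) < α := by linarith
  set g : ℝ → ℝ := fun t => Real.sqrt (κ ^ 2 + 4 * m ^ 2 * c ^ 4 * t ^ 2) / (2 * κ * t)
      + (1/2 - 1/α) / t with hg
  have hd0 : (0:ℝ) ≤ 1/2 - 1/α := by
    rw [sub_nonneg, div_le_div_iff₀ hα0 (by norm_num)]; linarith
  have hfg : ∀ t > (0:ℝ), f t = g t := by
    intro t ht
    rw [hf t ht]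
    set s := Real.sqrt (κ ^ 2 + 4 * m ^ 2 * c ^ 4 * t ^ 2) with hs
    have hsq : s ^ 2 = κ ^ 2 + 4 * m ^ 2 * c ^ 4 * t ^ 2 := Real.sq_sqrt (by positivity)
    have hsn : 0 ≤ s := Real.sqrt_nonneg _
    have hκs : κ < s := by
      refine lt_of_pow_lt_pow_left₀ 2 hsn ?_
      nlinarith [mul_pos (mul_pos (pow_pos hm 2) (pow_pos hc 4)) (pow_pos ht 2)]
    have hd : -κ ^ 2 + κ * s ≠ 0 := by nlinarith
    have ht' : t ≠ 0 := ne_of_gt ht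
    have hα' : α ≠ 0 := ne_of_gt hα0
    have hd2 : -κ + s ≠ 0 := by linarith
    show _ = s / (2 * κ * t) + (1/2 - 1/α) / t
    field_simp
    linear_combination (-α) * hsq
  have hanti : StrictAntiOn g (Set.Ioi 0) := by
    intro x hx y hy hxy
    simp only [Set.mem_Ioi] at hx hy
    set sx := Real.sqrt (κ ^ 2 + 4 * m ^ 2 * c ^ 4 * x ^ 2) with hsx
    set sy := Real.sqrt (κ ^ 2 + 4 * m ^ 2 * c ^ 4 * y ^ 2) with hsy
    have hx2 : x ^ 2 < y ^ 2 := by nlinarith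
    have e1 : x * sy = Real.sqrt (x ^ 2 * (κ ^ 2 + 4 * m ^ 2 * c ^ 4 * y ^ 2)) := by
      rw [Real.sqrt_mul (sq_nonneg x), Real.sqrt_sq hx.le]
    have e2 : y * sx = Real.sqrt (y ^ 2 * (κ ^ 2 + 4 * m ^ 2 * c ^ 4 * x ^ 2)) := by
      rw [Real.sqrt_mul (sq_nonneg y), Real.sqrt_sq hy.le]
    have h1 : x * sy < y * sx := by
      rw [e1, e2]
      apply Real.sqrt_lt_sqrt (by positivity)
      nlinarith [mul_pos (pow_pos hκ 2) (sub_pos.mpr hx2)]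
    have h2 : sy / (2 * κ * y) < sx / (2 * κ * x) := by
      rw [div_lt_div_iff₀ (by positivity) (by positivity)]
      nlinarith [h1, hκ]
    have h3 : (1/2 - 1/α) / y ≤ (1/2 - 1/α) / x := by
      rw [div_eq_mul_one_div, div_eq_mul_one_div ((1:ℝ)/2 - 1/α) x]
      exact mul_le_mul_of_nonneg_left (one_div_le_one_div_of_le hx hxy.le) hd0
    exact add_lt_add_of_lt_of_le h2 h3
  have hlow : ∀ t > (0:ℝ), m * c ^ 2 / κ < g t := by
    intro t ht
    set s := Real.sqrt (κ ^ 2 + 4 * m ^ 2 * c ^ 4 * t ^ 2) with hs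
    have hsn : 0 ≤ s := Real.sqrt_nonneg _
    have h2mc : 2 * m * c ^ 2 * t < s := by
      refine lt_of_pow_lt_pow_left₀ 2 hsn ?_
      rw [Real.sq_sqrt (by positivity)]
      nlinarith [pow_pos hκ 2]
    have e : m * c ^ 2 / κ = (2 * m * c ^ 2 * t) / (2 * κ * t) := by
      field_simp
    have h1 : (2 * m * c ^ 2 * t) / (2 * κ * t) < s / (2 * κ * t) :=
      (div_lt_div_iff_of_pos_right (by positivity)).mpr h2mc
    have h2 : (0:ℝ) ≤ (1/2 - 1/α) / t := div_nonneg hd0 ht.le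
    show m * c ^ 2 / κ < s / (2 * κ * t) + (1/2 - 1/α) / t
    rw [e]; linarith
  have hup : ∀ t > (0:ℝ), g t ≤ m * c ^ 2 / κ + 1 / t := by
    intro t ht
    set s := Real.sqrt (κ ^ 2 + 4 * m ^ 2 * c ^ 4 * t ^ 2) with hs
    have hsu : s ≤ κ + 2 * m * c ^ 2 * t := by
      have h := Real.sqrt_le_sqrt
        (show κ ^ 2 + 4 * m ^ 2 * c ^ 4 * t ^ 2 ≤ (κ + 2 * m * c ^ 2 * t) ^ 2 by
          nlinarith [mul_pos (mul_pos hm (pow_pos hc 2)) ht, hκ])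
      rwa [Real.sqrt_sq (by positivity)] at h
    have h1 : s / (2 * κ * t) ≤ (κ + 2 * m * c ^ 2 * t) / (2 * κ * t) :=
      (div_le_div_iff_of_pos_right (by positivity)).mpr hsu
    have h2 : (1/2 - 1/α) / t ≤ (1/2 : ℝ) / t := by
      refine (div_le_div_iff_of_pos_right ht).mpr ?_
      have : (0:ℝ) < 1/α := by positivity
      linarith
    have e : (κ + 2 * m * c ^ 2 * t) / (2 * κ * t) + (1/2 : ℝ) / t = m * c ^ 2 / κ + 1 / t := by
      field_simp; ring
    show s / (2 * κ * t) + (1/2 - 1/α) / t ≤ _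
    linarith
  have hlow2 : ∀ t > (0:ℝ), 1 / (2 * t) ≤ g t := by
    intro t ht
    set s := Real.sqrt (κ ^ 2 + 4 * m ^ 2 * c ^ 4 * t ^ 2) with hs
    have hκs : κ ≤ s := by
      have h := Real.sqrt_le_sqrt (show κ ^ 2 ≤ κ ^ 2 + 4 * m ^ 2 * c ^ 4 * t ^ 2 by nlinarith [sq_nonneg (m * c ^ 2 * t)])
      rwa [Real.sqrt_sq hκ.le] at h
    have h1 : κ / (2 * κ * t) ≤ s / (2 * κ * t) := (div_le_div_iff_of_pos_right (by positivity)).mpr hκs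
    have e : κ / (2 * κ * t) = 1 / (2 * t) := by field_simp
    have h2 : (0:ℝ) ≤ (1/2 - 1/α) / t := div_nonneg hd0 ht.le
    show 1 / (2 * t) ≤ s / (2 * κ * t) + (1/2 - 1/α) / t
    rw [← e]; linarith
  have hgc : ContinuousOn g (Set.Ioi (0:ℝ)) := by
    rw [hg]
    have c1 : Continuous fun t : ℝ => κ ^ 2 + 4 * m ^ 2 * c ^ 4 * t ^ 2 :=
      continuous_const.add (continuous_const.mul (continuous_pow 2))
    have c2 : Continuous fun t : ℝ => Real.sqrt (κ ^ 2 + 4 * m ^ 2 * c ^ 4 * t ^ 2) :=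
      Real.continuous_sqrt.comp c1
    have c3 : Continuous fun t : ℝ => 2 * κ * t := continuous_const.mul continuous_id
    exact (c2.continuousOn.div c3.continuousOn
        (fun x hx => by have : (0:ℝ) < x := hx; positivity)).add
      (continuousOn_const.div continuousOn_id (fun x hx => ne_of_gt hx))
  clear_value g
  clear hg
  constructor
  · intro x hx y hy hxy
    rw [hfg x hx, hfg y hy]
    exact hanti hx hy hxy
  · ext y
    simp only [Set.mem_image, Set.mem_Ioi]
    constructor
    · rintro ⟨t, ht, rfl⟩
      rw [hfg t ht]
      exact hlow t ht
    · intro hy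
      have hL : (0:ℝ) < m * c ^ 2 / κ := by positivity
      have hy0 : 0 < y := lt_trans hL hy
      have hyL : 0 < y - m * c ^ 2 / κ := sub_pos.mpr hy
      obtain ⟨t₂, ht₂, hgt₂⟩ : ∃ t₂ > (0:ℝ), g t₂ < y := by
        refine ⟨2 / (y - m * c ^ 2 / κ), by positivity, ?_⟩
        have h := hup (2 / (y - m * c ^ 2 / κ)) (by positivity)
        have h12 : 1 / (2 / (y - m * c ^ 2 / κ)) = (y - m * c ^ 2 / κ) / 2 := one_div_div _ _
        rw [h12] at h
        linarith
      obtain ⟨t₁, ht₁, ht₁₂, hgt₁⟩ : ∃ t₁, 0 < t₁ ∧ t₁ ≤ t₂ ∧ y ≤ g t₁ := by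
        refine ⟨min t₂ (1 / (2 * y)), lt_min ht₂ (by positivity), min_le_left _ _, ?_⟩
        have h := hlow2 (min t₂ (1 / (2 * y))) (lt_min ht₂ (by positivity))
        have hle : min t₂ (1 / (2 * y)) ≤ 1 / (2 * y) := min_le_right _ _
        have h2 : y ≤ 1 / (2 * min t₂ (1 / (2 * y))) := by
          rw [le_div_iff₀ (by positivity)]
          have hmul := mul_le_mul_of_nonneg_left hle (by positivity : (0:ℝ) ≤ 2 * y)
          have e : 2 * y * (1 / (2 * y)) = 1 := by field_simp
          rw [e] at hmul
          linarith [mul_comm (2 * y) (min t₂ (1 / (2 * y)))]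
        linarith
      have hcont : ContinuousOn f (Set.Icc t₁ t₂) := by
        have hsub : Set.Icc t₁ t₂ ⊆ Set.Ioi (0:ℝ) := fun x hx => lt_of_lt_of_le ht₁ hx.1
        exact (hgc.mono hsub).congr (fun x hx => hfg x (hsub hx))
      have hy1 : f t₂ ≤ y := by rw [hfg t₂ ht₂]; exact hgt₂.le
      have hy2 : y ≤ f t₁ := by rw [hfg t₁ ht₁]; exact hgt₁
      obtain ⟨t, htmem, hfty⟩ := intermediate_value_Icc' ht₁₂ hcont
        (Set.mem_Icc.mpr ⟨hy1, hy2⟩)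
      exact ⟨t, lt_of_lt_of_le ht₁ htmem.1, hfty⟩
end

section
/- Let $m, c, \kappa > 0$ and $1 < \alpha < 2$. Define $f(t) = \frac{2m^2c^4 t}{-\kappa^2 + \kappa\sqrt{\kappa^2 + 4m^2c^4 t^2}} - \frac{1}{\alpha t}$ for $t > 0$. Then $f$ has a unique minimum point $t_{\min} = \frac{\kappa\sqrt{\alpha - 1}}{mc^2(2-\alpha)}$, with minimum value $f(t_{\min}) = \frac{2mc^2}{\kappa}\cdot\frac{\sqrt{\alpha-1}}{\alpha}$. -/
set_option maxHeartbeats 800000 in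
/-- Core inequality: for `0 < A < κ` shape problem after rationalization. -/
private lemma stmt_11_aux_ineq (κ α b r t s : ℝ) (hκ : 0 < κ) (hα₁ : 1 < α) (hα₂ : α < 2)
    (hb0 : 0 < b) (hr2 : r ^ 2 = α - 1) (hrpos : 0 < r) (ht : 0 < t)
    (hs2 : s ^ 2 = κ ^ 2 + 4 * b ^ 2 * t ^ 2) (hsκ : κ < s) :
    α * s ≥ κ * (2 - α) + 4 * b * r * t := by
  have hsum : 0 < α * s + (κ * (2 - α) + 4 * b * r * t) := by
    have h1 : 0 < α * s := mul_pos (by linarith) (by linarith)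
    have h2 : 0 < 4 * b * r * t := by positivity
    have h3 : 0 < κ * (2 - α) := mul_pos hκ (by linarith)
    linarith
  have key0 : (κ * (2 - α) + 4 * b * r * t) ^ 2 - (α * s) ^ 2
      = -4 * (κ * r - b * t * (2 - α)) ^ 2 := by
    linear_combination (-α ^ 2) * hs2 + (4 * κ ^ 2 + 16 * b ^ 2 * t ^ 2) * hr2
  nlinarith [sq_nonneg (κ * r - b * t * (2 - α)), key0, hsum]

private lemma stmt_11_aux_eq (κ α b r t s : ℝ) (hκ : 0 < κ) (hα₁ : 1 < α) (hα₂ : α < 2)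
    (hb0 : 0 < b) (hr2 : r ^ 2 = α - 1) (hrpos : 0 < r) (ht : 0 < t)
    (hs2 : s ^ 2 = κ ^ 2 + 4 * b ^ 2 * t ^ 2) (hsκ : κ < s)
    (h1 : α * s = κ * (2 - α) + 4 * b * r * t) :
    κ * r = b * t * (2 - α) := by
  have key0 : (κ * (2 - α) + 4 * b * r * t) ^ 2 - (α * s) ^ 2
      = -4 * (κ * r - b * t * (2 - α)) ^ 2 := by
    linear_combination (-α ^ 2) * hs2 + (4 * κ ^ 2 + 16 * b ^ 2 * t ^ 2) * hr2
  have h1sq : (α * s) ^ 2 = (κ * (2 - α) + 4 * b * r * t) ^ 2 := by rw [h1]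
  have hz : (κ * r - b * t * (2 - α)) ^ 2 = 0 := by linarith
  have := sq_eq_zero_iff.mp hz
  linarith

set_option maxHeartbeats 1600000 in
/-- For `1 < α < 2`, the function
`f t = 2m²c⁴t/(-κ² + κ√(κ²+4m²c⁴t²)) - 1/(αt)` has a unique minimum point
`t_min = κ√(α-1)/(mc²(2-α))`, with minimum value `(2mc²/κ)·√(α-1)/α`. -/
theorem stmt_11 (m c κ α : ℝ) (hm : 0 < m) (hc : 0 < c) (hκ : 0 < κ)
    (hα₁ : 1 < α) (hα₂ : α < 2)
    (f : ℝ → ℝ)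
    (hf : ∀ t > (0 : ℝ), f t =
      2 * m ^ 2 * c ^ 4 * t / (-κ ^ 2 + κ * Real.sqrt (κ ^ 2 + 4 * m ^ 2 * c ^ 4 * t ^ 2))
        - 1 / (α * t))
    (tmin : ℝ) (htmin : tmin = κ * Real.sqrt (α - 1) / (m * c ^ 2 * (2 - α))) :
    (∀ t > (0 : ℝ), f tmin ≤ f t) ∧
    (∀ t > (0 : ℝ), f t = f tmin → t = tmin) ∧
    f tmin = 2 * m * c ^ 2 / κ * (Real.sqrt (α - 1) / α) := by
  have hα0 : (0:ℝ) < α := by linarith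
  have h2α : (0:ℝ) < 2 - α := by linarith
  set b : ℝ := m * c ^ 2 with hbdef
  have hb0 : 0 < b := by positivity
  have hb2 : m ^ 2 * c ^ 4 = b ^ 2 := by rw [hbdef]; ring
  set r : ℝ := Real.sqrt (α - 1) with hrdef
  have hr2 : r ^ 2 = α - 1 := Real.sq_sqrt (by linarith)
  have hrpos : 0 < r := Real.sqrt_pos.mpr (by linarith)
  have htm : tmin = κ * r / (b * (2 - α)) := htmin
  have htm0 : 0 < tmin := by rw [htm]; positivity
  -- sqrt facts
  have hsfact : ∀ t : ℝ, 0 < t →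
      Real.sqrt (κ ^ 2 + 4 * m ^ 2 * c ^ 4 * t ^ 2) ^ 2 = κ ^ 2 + 4 * b ^ 2 * t ^ 2 ∧
      κ < Real.sqrt (κ ^ 2 + 4 * m ^ 2 * c ^ 4 * t ^ 2) := by
    intro t ht
    have h1 : Real.sqrt (κ ^ 2 + 4 * m ^ 2 * c ^ 4 * t ^ 2) ^ 2
        = κ ^ 2 + 4 * b ^ 2 * t ^ 2 := by
      rw [Real.sq_sqrt (by positivity)]; linear_combination (4 * t ^ 2) * hb2
    refine ⟨h1, ?_⟩
    nlinarith [Real.sqrt_nonneg (κ ^ 2 + 4 * m ^ 2 * c ^ 4 * t ^ 2), h1,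
      mul_pos (mul_pos hb0 hb0) (mul_pos ht ht)]
  -- sqrt at tmin
  have hstm : Real.sqrt (κ ^ 2 + 4 * m ^ 2 * c ^ 4 * tmin ^ 2) = κ * α / (2 - α) := by
    rw [show κ ^ 2 + 4 * m ^ 2 * c ^ 4 * tmin ^ 2 = (κ * α / (2 - α)) ^ 2 by
      rw [htm]; field_simp
      linear_combination (4 * r ^ 2) * hb2 + (4 * b ^ 2) * hr2]
    exact Real.sqrt_sq (by positivity)
  -- key rewrite of f
  have key : ∀ t : ℝ, 0 < t → f t =
      (α * (Real.sqrt (κ ^ 2 + 4 * m ^ 2 * c ^ 4 * t ^ 2) + κ) - 2 * κ) / (2 * κ * α * t) := by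
    intro t ht
    obtain ⟨hs2, hsκ⟩ := hsfact t ht
    set s : ℝ := Real.sqrt (κ ^ 2 + 4 * m ^ 2 * c ^ 4 * t ^ 2)
    have hden : 0 < -κ ^ 2 + κ * s := by nlinarith
    rw [hf t ht, div_sub_div _ _ (ne_of_gt hden) (by positivity),
      div_eq_div_iff (by positivity) (by positivity)]
    linear_combination (4 * κ * α ^ 2 * t ^ 3) * hb2 - (α ^ 2 * κ * t) * hs2
  -- value at tmin
  have hval : f tmin = 2 * b * r / (κ * α) := by
    rw [key tmin htm0, hstm, htm]
    field_simp
    linear_combination (-4) * hr2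
  refine ⟨?_, ?_, ?_⟩
  · intro t ht
    rw [key t ht, hval]
    obtain ⟨hs2, hsκ⟩ := hsfact t ht
    set s : ℝ := Real.sqrt (κ ^ 2 + 4 * m ^ 2 * c ^ 4 * t ^ 2)
    have hN := stmt_11_aux_ineq κ α b r t s hκ hα₁ hα₂ hb0 hr2 hrpos ht hs2 hsκ
    rw [div_le_div_iff₀ (by positivity) (by positivity)]
    nlinarith [hN, mul_pos hκ hα0, ht, mul_pos (mul_pos hκ hα0) ht]
  · intro t ht heq
    rw [key t ht, hval] at heq
    obtain ⟨hs2, hsκ⟩ := hsfact t ht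
    set s : ℝ := Real.sqrt (κ ^ 2 + 4 * m ^ 2 * c ^ 4 * t ^ 2)
    have h1 : α * s = κ * (2 - α) + 4 * b * r * t := by
      have h2 := (div_eq_div_iff (by positivity : (0:ℝ) < 2 * κ * α * t).ne'
        (by positivity : (0:ℝ) < κ * α).ne').mp heq
      have hκα : (0:ℝ) < κ * α := by positivity
      nlinarith [h2]
    have hz := stmt_11_aux_eq κ α b r t s hκ hα₁ hα₂ hb0 hr2 hrpos ht hs2 hsκ h1
    rw [htm]
    field_simp
    linarith [hz]
  · rw [hval, hbdef]; ring
end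

section
/- Let $m, c, \kappa, L > 0$, $\mathfrak{E} \in \mathbb{R}$, and $\alpha > 2$. Define $\widetilde\Phi(r) = c^2 L^2 r^{2\alpha - 2} - \frac{\kappa^2}{\alpha} - 2\mathfrak{E}\kappa r^{\alpha}$ for $r > 0$. Then $\widetilde\Phi$ has exactly one zero in $(0, \infty)$, and $\widetilde\Phi$ is negative before this zero and positive after it. -/
/-- For `α > 2`, the function `Φ̃ r = c²L²r^{2α-2} - κ²/α - 2𝔈κr^α` has exactly
one zero in `(0,∞)`, is negative before it and positive after it. -/
theorem stmt_15 (m c κ L E α : ℝ) (hm : 0 < m) (hc : 0 < c) (hκ : 0 < κ)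
    (hL : 0 < L) (hα : 2 < α)
    (Φt : ℝ → ℝ)
    (hΦt : ∀ r > (0 : ℝ), Φt r =
      c ^ 2 * L ^ 2 * r ^ (2 * α - 2) - κ ^ 2 / α - 2 * E * κ * r ^ α) :
    ∃ r₀ > (0 : ℝ), Φt r₀ = 0 ∧
      (∀ r, 0 < r → r < r₀ → Φt r < 0) ∧
      (∀ r, r₀ < r → 0 < Φt r) := by
  have hα0 : (0:ℝ) < α := by linarith
  set A := c ^ 2 * L ^ 2 with hAdef
  have hApos : 0 < A := by positivity
  set B := κ ^ 2 / α with hBdef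
  have hBpos : 0 < B := by positivity
  set C := 2 * E * κ with hCdef
  set h : ℝ → ℝ := fun r => A * r ^ (α - 2) - B * r ^ (-α) - C with hh
  -- factorization
  have hΦh : ∀ r, 0 < r → Φt r = r ^ α * h r := by
    intro r hr
    have h1 : r ^ α * r ^ (α - 2) = r ^ (2 * α - 2) := by
      rw [← Real.rpow_add hr]; ring_nf
    have h2 : r ^ α * r ^ (-α) = 1 := by
      rw [← Real.rpow_add hr]; simp
    rw [hΦt r hr]
    have : r ^ α * h r = A * (r ^ α * r ^ (α - 2)) - B * (r ^ α * r ^ (-α)) - C * r ^ α := by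
      simp only [hh]; ring
    rw [this, h1, h2]; ring
  -- strict monotonicity of h on (0,∞)
  have hmono : ∀ x y : ℝ, 0 < x → x < y → h x < h y := by
    intro x y hx hxy
    have hy : 0 < y := hx.trans hxy
    have t1 : x ^ (α - 2) < y ^ (α - 2) := Real.rpow_lt_rpow hx.le hxy (by linarith)
    have t2 : y ^ (-α) < x ^ (-α) := by
      rw [Real.rpow_neg hx.le, Real.rpow_neg hy.le]
      have hxa : x ^ α < y ^ α := Real.rpow_lt_rpow hx.le hxy hα0
      have hxap : (0:ℝ) < x ^ α := Real.rpow_pos_of_pos hx α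
      exact inv_strictAnti₀ hxap hxa
    have u1 := mul_lt_mul_of_pos_left t1 hApos
    have u2 := mul_lt_mul_of_pos_left t2 hBpos
    simp only [hh]
    linarith
  -- a point where h is negative
  set a := min 1 (B / (|A - C| + 1)) with hadef
  have habs : (0:ℝ) < |A - C| + 1 := by positivity
  have ha0 : 0 < a := lt_min one_pos (by positivity)
  have ha1 : a ≤ 1 := min_le_left _ _
  have haB : a ≤ B / (|A - C| + 1) := min_le_right _ _
  have hha : h a < 0 := by
    have e1 : a ^ (α - 2) ≤ 1 := Real.rpow_le_one ha0.le ha1 (by linarith)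
    have e2 : a ^ α ≤ a := by
      have := Real.rpow_le_rpow_of_exponent_ge ha0 ha1 (show (1:ℝ) ≤ α by linarith)
      simpa using this
    have e3 : a⁻¹ ≤ a ^ (-α) := by
      rw [Real.rpow_neg ha0.le]
      exact inv_anti₀ (Real.rpow_pos_of_pos ha0 α) e2
    have e4 : |A - C| + 1 ≤ a⁻¹ * B := by
      have h1 : a * (|A - C| + 1) ≤ B := (le_div_iff₀ habs).mp haB
      have h2 := mul_le_mul_of_nonneg_left h1 (inv_pos.mpr ha0).le
      rwa [← mul_assoc, inv_mul_cancel₀ ha0.ne', one_mul] at h2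
    have e5 : a⁻¹ * B ≤ a ^ (-α) * B := mul_le_mul_of_nonneg_right e3 hBpos.le
    have e6 : A * a ^ (α - 2) ≤ A := by nlinarith
    have e7 : A - C ≤ |A - C| := le_abs_self _
    simp only [hh]
    nlinarith
  -- a point where h is positive
  set K := |B + C| + 1 with hKdef
  have hKpos : (0:ℝ) < K := by positivity
  set s := (K / A) ^ (1 / (α - 2)) with hsdef
  have hs0 : 0 ≤ s := Real.rpow_nonneg (by positivity) _
  set b := max 1 s with hbdef
  have hb1 : (1:ℝ) ≤ b := le_max_left _ _
  have hbs : s ≤ b := le_max_right _ _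
  have hhb : 0 < h b := by
    have hsa : s ^ (α - 2) = K / A := by
      rw [hsdef, ← Real.rpow_mul (by positivity),
        one_div_mul_cancel (by linarith : α - 2 ≠ 0), Real.rpow_one]
    have e1 : K / A ≤ b ^ (α - 2) := by
      rw [← hsa]
      exact Real.rpow_le_rpow hs0 hbs (by linarith)
    have e2 : K ≤ A * b ^ (α - 2) := by
      rw [div_le_iff₀ hApos] at e1
      linarith
    have e3 : b ^ (-α) ≤ 1 := Real.rpow_le_one_of_one_le_of_nonpos hb1 (by linarith)
    have e4 : B * b ^ (-α) ≤ B := by nlinarith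
    have e5 : B + C ≤ |B + C| := le_abs_self _
    simp only [hh]
    nlinarith
  have hab : a ≤ b := ha1.trans hb1
  -- continuity on [a,b]
  have hcont : ContinuousOn h (Set.Icc a b) := by
    intro r hr
    have hr0 : 0 < r := lt_of_lt_of_le ha0 hr.1
    apply ContinuousAt.continuousWithinAt
    have c1 : ContinuousAt (fun r : ℝ => r ^ (α - 2)) r :=
      Real.continuousAt_rpow_const r _ (Or.inl hr0.ne')
    have c2 : ContinuousAt (fun r : ℝ => r ^ (-α)) r :=
      Real.continuousAt_rpow_const r _ (Or.inl hr0.ne')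
    exact ((continuousAt_const.mul c1).sub (continuousAt_const.mul c2)).sub continuousAt_const
  -- IVT
  have h0mem : (0:ℝ) ∈ Set.Icc (h a) (h b) := ⟨hha.le, hhb.le⟩
  obtain ⟨r₀, hr₀mem, hr₀⟩ := intermediate_value_Icc hab hcont h0mem
  have hr₀pos : 0 < r₀ := lt_of_lt_of_le ha0 hr₀mem.1
  refine ⟨r₀, hr₀pos, ?_, ?_, ?_⟩
  · rw [hΦh r₀ hr₀pos, hr₀, mul_zero]
  · intro r hr hrlt
    have : h r < 0 := by rw [← hr₀]; exact hmono r r₀ hr hrlt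
    rw [hΦh r hr]
    exact mul_neg_of_pos_of_neg (Real.rpow_pos_of_pos hr α) this
  · intro r hrgt
    have hr : 0 < r := hr₀pos.trans hrgt
    have : 0 < h r := by rw [← hr₀]; exact hmono r₀ r hr₀pos hrgt
    rw [hΦh r hr]
    exact mul_pos (Real.rpow_pos_of_pos hr α) this
end

section
/- Let $m, c, \kappa, L > 0$, $\mathfrak{E} \in \mathbb{R}$, and $\alpha > 2$. Define $\Phi(r) = \frac{1}{c^2}\left(\frac{\kappa^2}{\alpha^2 r^{2\alpha}} - \frac{c^2L^2}{r^2} + \frac{2\mathfrak{E}\kappa}{\alpha r^\alpha} + \mathfrak{E}^2 - m^2c^4\right)$ for $r > 0$. Then $\Phi$ has exactly one critical point in $(0,\infty)$, which is a global minimum, and consequently there are no $0 < r_1 < r_2$ with $\Phi(r_1) = \Phi(r_2) = 0$ and $\Phi > 0$ on $(r_1, r_2)$. -/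
/-- For `α > 2`, the effective radial function
`Φ r = (1/c²)(κ²/(α²r^{2α}) - c²L²/r² + 2𝔈κ/(αr^α) + 𝔈² - m²c⁴)` has exactly
one critical point in `(0,∞)`, a global minimum; consequently there are no two
zeros `r₁ < r₂` with `Φ > 0` on `(r₁, r₂)`. -/
theorem stmt_16 (m c κ L E α : ℝ) (hm : 0 < m) (hc : 0 < c) (hκ : 0 < κ)
    (hL : 0 < L) (hα : 2 < α)
    (Φ : ℝ → ℝ)
    (hΦ : ∀ r > (0 : ℝ), Φ r =
      (1 / c ^ 2) * (κ ^ 2 / (α ^ 2 * r ^ (2 * α)) - c ^ 2 * L ^ 2 / r ^ 2 +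
        2 * E * κ / (α * r ^ α) + E ^ 2 - m ^ 2 * c ^ 4)) :
    (∃ r₀ > (0 : ℝ), deriv Φ r₀ = 0 ∧
      (∀ r > (0 : ℝ), deriv Φ r = 0 → r = r₀) ∧
      (∀ r > (0 : ℝ), Φ r₀ ≤ Φ r)) ∧
    ¬ ∃ r₁ r₂ : ℝ, 0 < r₁ ∧ r₁ < r₂ ∧ Φ r₁ = 0 ∧ Φ r₂ = 0 ∧
      ∀ r ∈ Set.Ioo r₁ r₂, 0 < Φ r := by
  have hα0 : (0:ℝ) < α := by linarith
  have hαne : α ≠ 0 := ne_of_gt hα0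
  have hα2 : (0:ℝ) < α - 2 := by linarith
  have hcne : c ≠ 0 := ne_of_gt hc
  set g : ℝ → ℝ := fun r => c ^ 2 * L ^ 2 * r ^ (α - 2) - κ ^ 2 / (α * r ^ α) - E * κ
    with hgdef
  -- derivative of Φ at every positive point
  have hΦhas : ∀ r : ℝ, 0 < r → HasDerivAt Φ (2 / (c ^ 2 * r ^ (α + 1)) * g r) r := by
    intro r hr
    have hrne : r ≠ 0 := ne_of_gt hr
    have hXpos : 0 < r ^ α := Real.rpow_pos_of_pos hr α
    have hXne : r ^ α ≠ 0 := ne_of_gt hXpos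
    have hX2pos : 0 < r ^ (2 * α) := Real.rpow_pos_of_pos hr _
    have t1 : HasDerivAt (fun x : ℝ => κ ^ 2 / (α ^ 2 * x ^ (2 * α)))
        ((0 * (α ^ 2 * r ^ (2 * α)) - κ ^ 2 * (α ^ 2 * ((2 * α) * r ^ (2 * α - 1)))) /
          (α ^ 2 * r ^ (2 * α)) ^ 2) r :=
      (hasDerivAt_const r (κ ^ 2)).div
        ((Real.hasDerivAt_rpow_const (Or.inl hrne)).const_mul (α ^ 2)) (by positivity)
    have t2 : HasDerivAt (fun x : ℝ => c ^ 2 * L ^ 2 / x ^ 2)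
        ((0 * r ^ 2 - c ^ 2 * L ^ 2 * ((2 : ℕ) * r ^ 1)) / (r ^ 2) ^ 2) r :=
      (hasDerivAt_const r (c ^ 2 * L ^ 2)).div (hasDerivAt_pow 2 r) (by positivity)
    have t3 : HasDerivAt (fun x : ℝ => 2 * E * κ / (α * x ^ α))
        ((0 * (α * r ^ α) - 2 * E * κ * (α * (α * r ^ (α - 1)))) / (α * r ^ α) ^ 2) r :=
      (hasDerivAt_const r (2 * E * κ)).div
        ((Real.hasDerivAt_rpow_const (Or.inl hrne)).const_mul α) (by positivity)
    have H := ((((t1.sub t2).add t3).add_const (E ^ 2)).sub_const (m ^ 2 * c ^ 4)).const_mul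
      (1 / c ^ 2)
    have hEq : Φ =ᶠ[nhds r] fun x : ℝ =>
        (1 / c ^ 2) * (κ ^ 2 / (α ^ 2 * x ^ (2 * α)) - c ^ 2 * L ^ 2 / x ^ 2 +
          2 * E * κ / (α * x ^ α) + E ^ 2 - m ^ 2 * c ^ 4) :=
      Filter.eventuallyEq_of_mem (isOpen_Ioi.mem_nhds hr) (fun x hx => hΦ x hx)
    have H' := H.congr_of_eventuallyEq hEq
    convert H' using 1
    case e'_4 => rfl
    case e'_5 => rfl
    have e1 : r ^ (2 * α) = (r ^ α) ^ 2 := by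
      rw [mul_comm, Real.rpow_mul hr.le]
      norm_num [Real.rpow_natCast (r ^ α) 2]
    have e2 : r ^ (2 * α - 1) = (r ^ α) ^ 2 / r := by
      rw [Real.rpow_sub hr, e1, Real.rpow_one]
    have e3 : r ^ (α - 1) = r ^ α / r := by
      rw [Real.rpow_sub hr, Real.rpow_one]
    have e4 : r ^ (α + 1) = r ^ α * r := by
      rw [Real.rpow_add hr, Real.rpow_one]
    have e5 : r ^ (α - 2) = r ^ α / r ^ 2 := by
      rw [show α - 2 = α - (2:ℕ) by norm_num, Real.rpow_sub hr, Real.rpow_natCast]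
    rw [hgdef]
    simp only [e1, e2, e3, e4, e5]
    field_simp
    ring
  have hΦderiv : ∀ r : ℝ, 0 < r → deriv Φ r = 2 / (c ^ 2 * r ^ (α + 1)) * g r :=
    fun r hr => (hΦhas r hr).deriv
  -- g is strictly monotone on (0, ∞)
  have hgmono : StrictMonoOn g (Set.Ioi 0) := by
    intro x hx y hy hxy
    simp only [Set.mem_Ioi] at hx hy
    have h1 : x ^ (α - 2) < y ^ (α - 2) := Real.rpow_lt_rpow hx.le hxy hα2
    have h2 : x ^ α < y ^ α := Real.rpow_lt_rpow hx.le hxy hα0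
    have hA : c ^ 2 * L ^ 2 * x ^ (α - 2) < c ^ 2 * L ^ 2 * y ^ (α - 2) :=
      mul_lt_mul_of_pos_left h1 (by positivity)
    have hB : κ ^ 2 / (α * y ^ α) < κ ^ 2 / (α * x ^ α) :=
      div_lt_div_of_pos_left (by positivity)
        (by positivity : (0:ℝ) < α * x ^ α) (mul_lt_mul_of_pos_left h2 hα0)
    simp only [hgdef]
    linarith
  -- continuity of g on positive points
  have hgcont : ∀ x : ℝ, 0 < x → ContinuousAt g x := by
    intro x hx
    have hxne : x ≠ 0 := ne_of_gt hx
    have c1 : ContinuousAt (fun r : ℝ => r ^ (α - 2)) x :=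
      Real.continuousAt_rpow_const x _ (Or.inl hxne)
    have c2 : ContinuousAt (fun r : ℝ => r ^ α) x :=
      Real.continuousAt_rpow_const x _ (Or.inl hxne)
    have hne : α * x ^ α ≠ 0 := by positivity
    exact ((continuousAt_const.mul c1).sub
      (continuousAt_const.div (continuousAt_const.mul c2) hne)).sub continuousAt_const
  -- choose a small point where g < 0
  set M : ℝ := c ^ 2 * L ^ 2 + |E| * κ + 1 with hMdef
  have hM : 0 < M := by positivity
  set a : ℝ := min 1 ((κ ^ 2 / (2 * α * M)) ^ α⁻¹) with hadef
  have ha0 : 0 < a := lt_min one_pos (Real.rpow_pos_of_pos (by positivity) _)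
  have ha1 : a ≤ 1 := min_le_left _ _
  have haα : a ^ α ≤ κ ^ 2 / (2 * α * M) := by
    calc a ^ α ≤ ((κ ^ 2 / (2 * α * M)) ^ α⁻¹) ^ α :=
          Real.rpow_le_rpow ha0.le (min_le_right _ _) hα0.le
      _ = κ ^ 2 / (2 * α * M) := Real.rpow_inv_rpow (by positivity) hαne
  have hga : g a < 0 := by
    have h1 : a ^ (α - 2) ≤ 1 := Real.rpow_le_one ha0.le ha1 hα2.le
    have hapos : 0 < a ^ α := Real.rpow_pos_of_pos ha0 α
    have h2 : 2 * M ≤ κ ^ 2 / (α * a ^ α) := by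
      rw [le_div_iff₀ (by positivity)]
      calc 2 * M * (α * a ^ α) = 2 * α * M * a ^ α := by ring
        _ ≤ 2 * α * M * (κ ^ 2 / (2 * α * M)) := by
            apply mul_le_mul_of_nonneg_left haα (by positivity)
        _ = κ ^ 2 := by field_simp
    have hE : -(E * κ) ≤ |E| * κ := by
      have := neg_abs_le E
      nlinarith
    have : c ^ 2 * L ^ 2 * a ^ (α - 2) ≤ c ^ 2 * L ^ 2 * 1 :=
      mul_le_mul_of_nonneg_left h1 (by positivity)
    simp only [hgdef]
    nlinarith
  -- choose a large point where g > 0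
  set N : ℝ := κ ^ 2 / α + |E| * κ + 1 with hNdef
  set b : ℝ := max 1 ((N / (c ^ 2 * L ^ 2)) ^ (α - 2)⁻¹) with hbdef
  have hb1 : (1:ℝ) ≤ b := le_max_left _ _
  have hb0 : 0 < b := lt_of_lt_of_le one_pos hb1
  have hN : 0 < N := by positivity
  have hbα : N / (c ^ 2 * L ^ 2) ≤ b ^ (α - 2) := by
    calc N / (c ^ 2 * L ^ 2) = ((N / (c ^ 2 * L ^ 2)) ^ (α - 2)⁻¹) ^ (α - 2) :=
          (Real.rpow_inv_rpow (by positivity) (ne_of_gt hα2)).symm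
      _ ≤ b ^ (α - 2) :=
          Real.rpow_le_rpow (Real.rpow_nonneg (by positivity) _) (le_max_right _ _) hα2.le
  have hgb : 0 < g b := by
    have h1 : N ≤ c ^ 2 * L ^ 2 * b ^ (α - 2) :=
      (div_le_iff₀' (by positivity)).mp hbα
    have h2 : (1:ℝ) ≤ b ^ α := Real.one_le_rpow hb1 hα0.le
    have h3 : κ ^ 2 / (α * b ^ α) ≤ κ ^ 2 / α := by
      apply div_le_div_of_nonneg_left (by positivity) hα0
      nlinarith [mul_le_mul_of_nonneg_left h2 hα0.le]
    have hE : E * κ ≤ |E| * κ := mul_le_mul_of_nonneg_right (le_abs_self E) hκ.le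
    rw [hNdef] at h1
    simp only [hgdef]
    linarith
  -- root of g by the intermediate value theorem
  have hab : a ≤ b := le_trans ha1 hb1
  have hcont : ContinuousOn g (Set.Icc a b) := fun x hx =>
    (hgcont x (lt_of_lt_of_le ha0 hx.1)).continuousWithinAt
  obtain ⟨r₀, hr₀mem, hgr₀⟩ := intermediate_value_Icc hab hcont ⟨hga.le, hgb.le⟩
  have hr₀ : 0 < r₀ := lt_of_lt_of_le ha0 hr₀mem.1
  -- sign of g on either side of r₀
  have hgneg : ∀ r : ℝ, 0 < r → r < r₀ → g r < 0 := by
    intro r hr hrr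
    have := hgmono (Set.mem_Ioi.2 hr) (Set.mem_Ioi.2 hr₀) hrr
    rwa [hgr₀] at this
  have hgpos : ∀ r : ℝ, r₀ < r → 0 < g r := by
    intro r hrr
    have := hgmono (Set.mem_Ioi.2 hr₀) (Set.mem_Ioi.2 (lt_trans hr₀ hrr)) hrr
    rwa [hgr₀] at this
  -- monotonicity of Φ
  have hanti : StrictAntiOn Φ (Set.Ioc 0 r₀) := by
    apply strictAntiOn_of_deriv_neg (convex_Ioc 0 r₀)
    · exact fun x hx => (hΦhas x hx.1).continuousAt.continuousWithinAt
    · intro x hx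
      rw [interior_Ioc] at hx
      rw [hΦderiv x hx.1]
      exact mul_neg_of_pos_of_neg
        (div_pos two_pos (mul_pos (by positivity) (Real.rpow_pos_of_pos hx.1 _)))
        (hgneg x hx.1 hx.2)
  have hmono : StrictMonoOn Φ (Set.Ici r₀) := by
    apply strictMonoOn_of_deriv_pos (convex_Ici r₀)
    · exact fun x hx => (hΦhas x (lt_of_lt_of_le hr₀ hx)).continuousAt.continuousWithinAt
    · intro x hx
      rw [interior_Ici] at hx
      rw [hΦderiv x (lt_trans hr₀ hx)]
      exact mul_pos
        (div_pos two_pos (mul_pos (by positivity) (Real.rpow_pos_of_pos (lt_trans hr₀ hx) _)))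
        (hgpos x hx)
  constructor
  · refine ⟨r₀, hr₀, ?_, ?_, ?_⟩
    · rw [hΦderiv r₀ hr₀, hgr₀, mul_zero]
    · intro r hr hdr
      rw [hΦderiv r hr] at hdr
      have hfac : (2 / (c ^ 2 * r ^ (α + 1))) ≠ 0 := by positivity
      have hgr : g r = 0 := by
        rcases mul_eq_zero.1 hdr with h | h
        · exact absurd h hfac
        · exact h
      by_contra hne
      rcases lt_or_gt_of_ne hne with h | h
      · exact absurd hgr (ne_of_lt (hgneg r hr h))
      · exact absurd hgr.symm (ne_of_lt (hgpos r h))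
    · intro r hr
      rcases le_or_gt r r₀ with h | h
      · rcases eq_or_lt_of_le h with h' | h'
        · rw [h']
        · exact (hanti ⟨hr, h⟩ ⟨hr₀, le_rfl⟩ h').le
      · exact (hmono (Set.self_mem_Ici) (Set.mem_Ici.2 h.le) h).le
  · rintro ⟨r₁, r₂, hr1, h12, hz1, hz2, hpos⟩
    set mid : ℝ := (r₁ + r₂) / 2 with hmid
    have hm1 : r₁ < mid := by simp only [hmid]; linarith
    have hm2 : mid < r₂ := by simp only [hmid]; linarith
    have hmpos : 0 < mid := lt_trans hr1 hm1
    have hΦmid : 0 < Φ mid := hpos mid ⟨hm1, hm2⟩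
    rcases le_or_gt r₂ r₀ with hcase | hcase
    · have : Φ mid < Φ r₁ :=
        hanti ⟨hr1, le_trans h12.le hcase⟩ ⟨hmpos, le_trans hm2.le hcase⟩ hm1
      rw [hz1] at this
      linarith
    · rcases le_or_gt r₀ r₁ with hcase2 | hcase2
      · have : Φ mid < Φ r₂ :=
          hmono (Set.mem_Ici.2 (le_trans hcase2 hm1.le)) (Set.mem_Ici.2 (by linarith)) hm2
        rw [hz2] at this
        linarith
      · have hΦr₀ : 0 < Φ r₀ := hpos r₀ ⟨hcase2, hcase⟩
        have : Φ r₀ < Φ r₁ := hanti ⟨hr1, hcase2.le⟩ ⟨hr₀, le_rfl⟩ hcase2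
        rw [hz1] at this
        linarith
end

section
/- Let $m, c, \kappa > 0$, $\alpha > 1$, $r > 0$, and set $\omega^2 = \frac{-\kappa^2 + \kappa\sqrt{\kappa^2 + 4c^4 m^2 r^{2\alpha}}}{2m^2c^2 r^{2\alpha+2}}$. Then $\omega^2 r^2 < c^2$ and $\frac{cm\omega^2 r}{\sqrt{c^2 - \omega^2 r^2}} = \frac{\kappa}{r^{\alpha+1}}$; that is, the curve $x(t) = r e^{i\omega t}$ satisfies $\frac{d}{dt}\left(\frac{m\dot x}{\sqrt{1 - |\dot x|^2/c^2}}\right) = -\frac{\kappa x}{|x|^{\alpha+2}}$. -/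
open Complex in
/-- With `ω² = (-κ² + κ√(κ²+4c⁴m²r^{2α}))/(2m²c²r^{2α+2})` one has
`ω²r² < c²` and `cmω²r/√(c²-ω²r²) = κ/r^{α+1}`; that is, the circular motion
`x(t) = r e^{iωt}` solves the relativistic central-force equation
`d/dt(mẋ/√(1-|ẋ|²/c²)) = -κx/|x|^{α+2}`. -/
theorem stmt_18 (m c κ α r ω : ℝ) (hm : 0 < m) (hc : 0 < c) (hκ : 0 < κ)
    (hα : 1 < α) (hr : 0 < r) (hω : 0 < ω)
    (hω2 : ω ^ 2 = (-κ ^ 2 + κ * Real.sqrt (κ ^ 2 + 4 * c ^ 4 * m ^ 2 * r ^ (2 * α))) /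
      (2 * m ^ 2 * c ^ 2 * r ^ (2 * α + 2)))
    (x : ℝ → ℂ) (hx : ∀ t, x t = (r : ℂ) * Complex.exp (ω * t * Complex.I)) :
    ω ^ 2 * r ^ 2 < c ^ 2 ∧
    c * m * ω ^ 2 * r / Real.sqrt (c ^ 2 - ω ^ 2 * r ^ 2) = κ / r ^ (α + 1) ∧
    ∀ t : ℝ,
      HasDerivAt
        (fun s => ((m / Real.sqrt (1 - ‖deriv x s‖ ^ 2 / c ^ 2) : ℝ) : ℂ) * deriv x s)
        (-((κ / ‖x t‖ ^ (α + 2) : ℝ) : ℂ) * x t) t := by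
  have hr0 : (0:ℝ) ≤ r := hr.le
  set Q := r ^ α with hQ
  have hQpos : 0 < Q := Real.rpow_pos_of_pos hr α
  have h2a : r ^ (2*α) = Q^2 := by
    rw [hQ, ← Real.rpow_natCast (r ^ α) 2, ← Real.rpow_mul hr0]
    norm_num [mul_comm]
  have ha1 : r ^ (α+1) = Q * r := by
    rw [Real.rpow_add hr, Real.rpow_one]
  have ha2 : r ^ (α+2) = Q * r^2 := by
    rw [Real.rpow_add hr, hQ, show (2:ℝ) = ((2:ℕ):ℝ) by norm_num, Real.rpow_natCast]
  have h2a2 : r ^ (2*α+2) = Q^2 * r^2 := by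
    rw [Real.rpow_add hr, h2a, show (2:ℝ) = ((2:ℕ):ℝ) by norm_num, Real.rpow_natCast]
  set S := Real.sqrt (κ ^ 2 + 4 * c ^ 4 * m ^ 2 * r ^ (2 * α)) with hS
  have hSarg : (0:ℝ) ≤ κ ^ 2 + 4 * c ^ 4 * m ^ 2 * r ^ (2 * α) := by positivity
  have hSnn : 0 ≤ S := Real.sqrt_nonneg _
  have hS2 : S^2 = κ^2 + 4*c^4*m^2*Q^2 := by
    rw [hS, Real.sq_sqrt hSarg, h2a]
  have hSgt : κ < S := by nlinarith [hS2, hSnn, hκ, mul_pos (mul_pos (pow_pos hc 4) (pow_pos hm 2)) (pow_pos hQpos 2)]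
  have key : 2*m^2*c^2*(Q^2*r^2) * ω^2 = κ*(S - κ) := by
    rw [h2a2] at hω2
    field_simp at hω2
    linarith [hω2]
  have hQr2 : (0:ℝ) < 2*m^2*c^2*Q^2 := by positivity
  have key2 : ω^2*r^2*(S+κ) = 2*κ*c^2 := by
    have h' : (ω^2*r^2*(S+κ)) * (2*m^2*c^2*Q^2) = (2*κ*c^2) * (2*m^2*c^2*Q^2) := by
      linear_combination (S+κ)*key + κ*hS2
    exact mul_right_cancel₀ (ne_of_gt hQr2) h'
  have part1 : ω ^ 2 * r ^ 2 < c ^ 2 := by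
    nlinarith [key2, hSgt, hκ, sq_nonneg c, mul_pos (mul_pos hω hω) (mul_pos hr hr)]
  have quart : c^2*m^2*ω^4*Q^2*r^4 = κ^2*(c^2 - ω^2*r^2) := by
    have h' : (c^2*m^2*ω^4*Q^2*r^4) * (4*m^2*c^2*Q^2) = (κ^2*(c^2-ω^2*r^2)) * (4*m^2*c^2*Q^2) := by
      linear_combination (2*m^2*c^2*Q^2*r^2*ω^2 + κ^2 + κ*S)*key + κ^2*hS2
    exact mul_right_cancel₀ (by positivity) h'
  have hsqD : Real.sqrt (c ^ 2 - ω ^ 2 * r ^ 2) = c*m*ω^2*Q*r^2/κ := by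
    rw [show c ^ 2 - ω ^ 2 * r ^ 2 = (c*m*ω^2*Q*r^2/κ)^2 by
      field_simp; linear_combination -quart]
    exact Real.sqrt_sq (by positivity)
  have part2 : c * m * ω ^ 2 * r / Real.sqrt (c ^ 2 - ω ^ 2 * r ^ 2) = κ / r ^ (α + 1) := by
    rw [hsqD, ha1]
    field_simp
  refine ⟨part1, part2, ?_⟩
  have hxfun : x = fun s : ℝ => (r:ℂ) * Complex.exp (ω * s * Complex.I) := funext hx
  have h0 : ∀ s : ℝ, HasDerivAt (fun u:ℝ => ((ω:ℂ)*u*Complex.I)) ((ω:ℂ)*Complex.I) s := by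
    intro s
    have := ((Complex.ofRealCLM.hasDerivAt (x := s)).const_mul ((ω:ℂ))).mul_const Complex.I
    simpa using this
  have hd : ∀ s : ℝ, HasDerivAt x ((r:ℂ)*((ω:ℂ)*Complex.I)*Complex.exp ((ω:ℂ)*(s:ℂ)*Complex.I)) s := by
    intro s
    have h1 := ((h0 s).cexp).const_mul (r:ℂ)
    rw [hxfun]
    convert h1 using 1
    · rfl
    ring
  have hderiv : deriv x = fun s : ℝ => (r:ℂ)*((ω:ℂ)*Complex.I)*Complex.exp ((ω:ℂ)*(s:ℂ)*Complex.I) :=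
    funext fun s => (hd s).deriv
  intro t
  have hnorm : ∀ s:ℝ, ‖(r:ℂ)*((ω:ℂ)*Complex.I)*Complex.exp ((ω:ℂ)*(s:ℂ)*Complex.I)‖ = r*ω := by
    intro s
    simp [Complex.norm_exp, abs_of_pos hr, abs_of_pos hω]
  have hnx : ‖(r:ℂ) * Complex.exp (ω*t*Complex.I)‖ = r := by
    simp [Complex.norm_exp, abs_of_pos hr]
  have hsq1 : Real.sqrt (1 - (r*ω)^2/c^2) = m*ω^2*Q*r^2/κ := by
    rw [show 1 - (r*ω)^2/c^2 = (m*ω^2*Q*r^2/κ)^2 by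
      field_simp
      linear_combination -quart]
    exact Real.sqrt_sq (by positivity)
  have coefKey : (m / Real.sqrt (1-(r*ω)^2/c^2)) * ω^2 = κ/(Q*r^2) := by
    rw [hsq1]
    field_simp
  have coefKeyC : ((m / Real.sqrt (1-(r*ω)^2/c^2) :ℝ):ℂ) * (ω:ℂ)^2 = ((κ/(Q*r^2):ℝ):ℂ) := by
    exact_mod_cast congrArg (fun y : ℝ => (y:ℂ)) coefKey
  simp only [hderiv, hnorm, hx t, hnx, ha2]
  set A : ℝ := m / Real.sqrt (1-(r*ω)^2/c^2) with hA
  have heq : (fun s:ℝ => ((A:ℝ):ℂ) * ((r:ℂ)*((ω:ℂ)*Complex.I)*Complex.exp ((ω:ℂ)*(s:ℂ)*Complex.I)))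
      = fun s:ℝ => (((A:ℝ):ℂ)*((r:ℂ)*((ω:ℂ)*Complex.I))) * Complex.exp ((ω:ℂ)*(s:ℂ)*Complex.I) := by
    funext s; ring
  rw [heq]
  have hm' := ((h0 t).cexp).const_mul (((A:ℝ):ℂ)*((r:ℂ)*((ω:ℂ)*Complex.I)))
  convert hm' using 1
  · rfl
  linear_combination (-(r:ℂ)*Complex.exp (ω*t*Complex.I)*Complex.I^2) * coefKeyC
    + (-((κ/(Q*r^2):ℝ):ℂ)*(r:ℂ)*Complex.exp (ω*t*Complex.I)) * Complex.I_sq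
end

section
/- Let $h, \kappa > 0$ and $\alpha > 2$, and let $R_h > 0$ satisfy $R_h^\alpha = \frac{\kappa}{h}\cdot\frac{\alpha - 2}{2\alpha}$. Let $r : (0,\infty) \to (0,\infty)$ be any function such that, with $\psi(x) = \frac{2x^2}{-\kappa+\sqrt{\kappa^2+4x^2}} - x$ and $\Theta(x) = hx + \kappa/\alpha$, the identity $\psi(mc^2 r(c)^\alpha) = \Theta(r(c)^\alpha)$ holds for all $c > 0$, and suppose $r(c)$ converges to some limit $r_\infty \geq 0$ as $c \to +\infty$. Then $r_\infty = R_h$. -/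
open Filter Topology

/-- Non-relativistic limit of the circular radius: if `r(c)` solves
`ψ(mc²r(c)^α) = Θ(r(c)^α)` for all `c > 0` and converges to some `r∞ ≥ 0` as
`c → +∞`, then `r∞ = R_h`, the classical circular radius with
`R_h^α = (κ/h)·(α-2)/(2α)`. -/
theorem stmt_19 (m h κ α : ℝ) (hm : 0 < m) (hh : 0 < h) (hκ : 0 < κ) (hα : 2 < α)
    (ψ Θ : ℝ → ℝ)
    (hψ : ∀ x > (0 : ℝ), ψ x = 2 * x ^ 2 / (-κ + Real.sqrt (κ ^ 2 + 4 * x ^ 2)) - x)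
    (hΘ : ∀ x : ℝ, Θ x = h * x + κ / α)
    (Rh : ℝ) (hRh : 0 < Rh) (hRhα : Rh ^ α = κ / h * ((α - 2) / (2 * α)))
    (r : ℝ → ℝ) (hrpos : ∀ c > (0 : ℝ), 0 < r c)
    (hr : ∀ c > (0 : ℝ), ψ (m * c ^ 2 * r c ^ α) = Θ (r c ^ α))
    (rinf : ℝ) (hrinf : 0 ≤ rinf)
    (hconv : Filter.Tendsto r Filter.atTop (nhds rinf)) :
    rinf = Rh := by
  have hα0 : (0:ℝ) < α := by linarith
  -- closed formula for ψ on positives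
  have key : ∀ y > (0:ℝ), ψ y = (Real.sqrt (κ^2 + 4*y^2) + κ)/2 - y := by
    intro y hy
    set s := Real.sqrt (κ^2 + 4*y^2) with hs_def
    have hs : s ^ 2 = κ^2 + 4*y^2 := Real.sq_sqrt (by positivity)
    have hsκ : κ < s := by
      nlinarith [Real.sqrt_nonneg (κ^2 + 4*y^2)]
    have hne : -κ + s ≠ 0 := by linarith
    rw [hψ y hy]
    have h4 : 2*y^2/(-κ + s) = (s+κ)/2 := by
      rw [div_eq_iff hne]; nlinarith
    rw [h4]
  -- lower bound for ψ on positives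
  have hlow : ∀ y > (0:ℝ), κ/2 ≤ ψ y := by
    intro y hy
    rw [key y hy]
    have hs : Real.sqrt (κ^2 + 4*y^2) ^ 2 = κ^2 + 4*y^2 := Real.sq_sqrt (by positivity)
    nlinarith [Real.sqrt_nonneg (κ^2 + 4*y^2)]
  -- upper bound for ψ on positives
  have hup : ∀ y > (0:ℝ), ψ y ≤ κ/2 + κ^2/(8*y) := by
    intro y hy
    rw [key y hy]
    have hs : Real.sqrt (κ^2 + 4*y^2) ^ 2 = κ^2 + 4*y^2 := Real.sq_sqrt (by positivity)
    have h8 : (0:ℝ) < 8*y := by linarith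
    rw [← sub_le_iff_le_add', le_div_iff₀ h8]
    nlinarith [sq_nonneg (Real.sqrt (κ^2 + 4*y^2) - 2*y), Real.sqrt_nonneg (κ^2 + 4*y^2)]
  have hev_pos : ∀ᶠ c in atTop, (0:ℝ) < c := eventually_gt_atTop 0
  rcases eq_or_lt_of_le hrinf with h0 | hL
  · -- rinf = 0 : contradiction
    exfalso
    have hrα : Tendsto (fun c => r c ^ α) atTop (𝓝 0) := by
      have := hconv.rpow (tendsto_const_nhds (x := α)) (Or.inr hα0)
      rwa [← h0, Real.zero_rpow (ne_of_gt hα0)] at this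
    have hΘlim : Tendsto (fun c => Θ (r c ^ α)) atTop (𝓝 (κ/α)) := by
      have : Tendsto (fun c => h * r c ^ α + κ/α) atTop (𝓝 (h * 0 + κ/α)) :=
        (hrα.const_mul h).add tendsto_const_nhds
      simpa [hΘ] using this
    have hge : κ/2 ≤ κ/α := by
      refine ge_of_tendsto hΘlim ?_
      filter_upwards [hev_pos] with c hc
      rw [← hr c hc]
      have hy0 : 0 < m * c ^ 2 * r c ^ α :=
        mul_pos (mul_pos hm (by positivity)) (Real.rpow_pos_of_pos (hrpos c hc) α)
      exact hlow _ hy0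
    have : κ/α < κ/2 := by
      rw [div_lt_div_iff₀ hα0 (by norm_num)]; nlinarith
    linarith
  · -- rinf > 0
    have hrα : Tendsto (fun c => r c ^ α) atTop (𝓝 (rinf ^ α)) :=
      hconv.rpow (tendsto_const_nhds (x := α)) (Or.inl (ne_of_gt hL))
    have hy_top : Tendsto (fun c => m * c ^ 2 * r c ^ α) atTop atTop := by
      have h1 : Tendsto (fun c : ℝ => m * c ^ 2) atTop atTop :=
        (tendsto_pow_atTop (two_ne_zero)).const_mul_atTop hm
      exact (h1.atTop_mul_pos (Real.rpow_pos_of_pos hL α) hrα)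
    -- limit of Θ side
    have hΘlim : Tendsto (fun c => Θ (r c ^ α)) atTop (𝓝 (h * rinf ^ α + κ/α)) := by
      have : Tendsto (fun c => h * r c ^ α + κ/α) atTop (𝓝 (h * rinf ^ α + κ/α)) :=
        (hrα.const_mul h).add tendsto_const_nhds
      simpa [hΘ] using this
    -- limit of ψ side via squeeze
    have hψlim : Tendsto (fun c => ψ (m * c ^ 2 * r c ^ α)) atTop (𝓝 (κ/2)) := by
      have hup' : Tendsto (fun c => κ/2 + κ^2/(8 * (m * c ^ 2 * r c ^ α))) atTop
          (𝓝 (κ/2 + 0)) :=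
        tendsto_const_nhds.add (tendsto_const_nhds.div_atTop
          (hy_top.const_mul_atTop (by norm_num : (0:ℝ) < 8)))
      refine tendsto_of_tendsto_of_tendsto_of_le_of_le'
        (tendsto_const_nhds (x := κ/2)) (by simpa using hup') ?_ ?_
      · filter_upwards [hy_top.eventually_gt_atTop 0] with c hc
        exact hlow _ hc
      · filter_upwards [hy_top.eventually_gt_atTop 0] with c hc
        exact hup _ hc
    have heq : ∀ᶠ c in atTop, ψ (m * c ^ 2 * r c ^ α) = Θ (r c ^ α) := by
      filter_upwards [hev_pos] with c hc using hr c hc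
    have hlim2 : Tendsto (fun c => ψ (m * c ^ 2 * r c ^ α)) atTop
        (𝓝 (h * rinf ^ α + κ/α)) := hΘlim.congr' (by filter_upwards [heq] with c hc using hc.symm)
    have hkey : κ/2 = h * rinf ^ α + κ/α := tendsto_nhds_unique hψlim hlim2
    have hpow : rinf ^ α = Rh ^ α := by
      rw [hRhα]
      have hα' : α ≠ 0 := ne_of_gt hα0
      field_simp at hkey ⊢
      nlinarith [hkey]
    have : rinf = (rinf ^ α) ^ α⁻¹ := (Real.rpow_rpow_inv hrinf (ne_of_gt hα0)).symm
    rw [this, hpow, Real.rpow_rpow_inv hRh.le (ne_of_gt hα0)]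
end
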